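/- arXiv:2307.13839 — 11 statements merged into one kernel-verified Lean document; each statement's English description precedes it below -/
import Mathlib

section
/- If ℓ₁ ≠ ℓ₂ are positive reals and α₁, α₂ are any real numbers, then the 2×3 matrix with rows (1/ℓ₁², cos α₁/ℓ₁³, sin α₁/ℓ₁³) and (1/ℓ₂², cos α₂/ℓ₂³, sin α₂/ℓ₂³) has rank 2. -/
open Real

theorem stmt0 (l1 l2 a1 a2 : ℝ) (hl1 : 0 < l1) (hl2 : 0 < l2) (hne : l1 ≠ l2) :
    Matrix.rank
      !![1 / l1 ^ 2, Real.cos a1 / l1 ^ 3, Real.sin a1 / l1 ^ 3;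
         1 / l2 ^ 2, Real.cos a2 / l2 ^ 3, Real.sin a2 / l2 ^ 3] = 2 := by
  have h1 : l1 ≠ 0 := ne_of_gt hl1
  have h2 : l2 ≠ 0 := ne_of_gt hl2
  have hli : LinearIndependent ℝ
      ![![1 / l1 ^ 2, Real.cos a1 / l1 ^ 3, Real.sin a1 / l1 ^ 3],
        ![1 / l2 ^ 2, Real.cos a2 / l2 ^ 3, Real.sin a2 / l2 ^ 3]] := by
    rw [linearIndependent_fin2]
    constructor
    · intro h
      have := congrFun h 0
      simp at this
      exact h2 (by nlinarith [sq_nonneg l2])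
    · intro a ha
      have e0 := congrFun ha 0
      have e1 := congrFun ha 1
      have e2 := congrFun ha 2
      simp [Matrix.smul_cons] at e0 e1 e2
      -- e0 : a * (1 / l2 ^ 2) = 1 / l1 ^ 2 etc.
      have ha' : a = l2 ^ 2 / l1 ^ 2 := by
        field_simp at e0
        field_simp
        linarith
      have hl12 : l1 ^ 2 * l2 ^ 2 ≠ 0 := by positivity
      have hc : l2 * Real.cos a1 = l1 * Real.cos a2 := by
        rw [ha'] at e1
        field_simp at e1
        linear_combination -e1
      have hs : l2 * Real.sin a1 = l1 * Real.sin a2 := by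
        rw [ha'] at e2
        field_simp at e2
        linear_combination -e2
      have hpyth1 := Real.sin_sq_add_cos_sq a1
      have hpyth2 := Real.sin_sq_add_cos_sq a2
      have hsq : l2 ^ 2 = l1 ^ 2 := by
        linear_combination l1 ^ 2 * hpyth2 - l2 ^ 2 * hpyth1 + (l2 * Real.cos a1 + l1 * Real.cos a2) * hc + (l2 * Real.sin a1 + l1 * Real.sin a2) * hs
      have : l1 = l2 := by nlinarith [hl1, hl2]
      exact hne this
  have := hli.rank_matrix
  exact this
end

section
/- Suppose α₁, α₂, x₁, x₂ : ℝ → ℝ are differentiable and satisfy the singular-curve equations with equal lengths: x₁' = cos((α₁+α₂)/2), x₂' = sin((α₁+α₂)/2), α₁' = -sin((α₁-α₂)/2), α₂' = sin((α₁-α₂)/2). Then α₁(t) + α₂(t) is constant, and the curve t ↦ (x₁(t), x₂(t)) is a line traversed at unit speed: (x₁', x₂') is the constant unit vector (cos c, sin c) where c = (α₁(0)+α₂(0))/2. -/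
open Real

theorem stmt4 (α₁ α₂ x₁ x₂ : ℝ → ℝ)
    (hx₁ : ∀ t, HasDerivAt x₁ (Real.cos ((α₁ t + α₂ t) / 2)) t)
    (hx₂ : ∀ t, HasDerivAt x₂ (Real.sin ((α₁ t + α₂ t) / 2)) t)
    (hα₁ : ∀ t, HasDerivAt α₁ (-Real.sin ((α₁ t - α₂ t) / 2)) t)
    (hα₂ : ∀ t, HasDerivAt α₂ (Real.sin ((α₁ t - α₂ t) / 2)) t) :
    (∀ t, α₁ t + α₂ t = α₁ 0 + α₂ 0) ∧
    (∀ t, HasDerivAt x₁ (Real.cos ((α₁ 0 + α₂ 0) / 2)) t ∧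
          HasDerivAt x₂ (Real.sin ((α₁ 0 + α₂ 0) / 2)) t) := by
  have hconst : ∀ t, α₁ t + α₂ t = α₁ 0 + α₂ 0 := by
    have h : ∀ t, HasDerivAt (fun t => α₁ t + α₂ t) 0 t := by
      intro t
      have := (hα₁ t).add (hα₂ t)
      exact (by simpa using this : HasDerivAt (α₁ + α₂) 0 t)
    intro t
    have := is_const_of_deriv_eq_zero (f := fun t => α₁ t + α₂ t)
      (fun t => (h t).differentiableAt) (fun t => (h t).deriv) t 0
    simpa using this
  refine ⟨hconst, fun t => ⟨?_, ?_⟩⟩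
  · simpa [hconst t] using hx₁ t
  · simpa [hconst t] using hx₂ t
end

section
/- Let ℓ₁ ≠ ℓ₂ be positive reals and suppose α₁, α₂ : ℝ → ℝ are differentiable with α₁' = (ℓ₁ cos(α₁-α₂) - ℓ₂)/(ℓ₁² ℓ₂) and α₂' = -(ℓ₂ cos(α₁-α₂) - ℓ₁)/(ℓ₁ ℓ₂²). Define S = sqrt((ℓ₁² + ℓ₂² - 2ℓ₁ℓ₂ cos(α₁-α₂))/(ℓ₁² ℓ₂²)) and κ = (ℓ₁² - ℓ₂²)/(ℓ₁ ℓ₂ sqrt(ℓ₁² + ℓ₂² - 2ℓ₁ℓ₂ cos(α₁-α₂))). If ℓ₁² + ℓ₂² - 2ℓ₁ℓ₂ cos(α₁(t)-α₂(t)) > 0 for all t, then κ, reparameterized by arc length s (with ds/dt = S), satisfies d²κ/ds² + κ³/2 + Aκ = 0 with A = -(ℓ₁² + ℓ₂²)/(2ℓ₁²ℓ₂²). -/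
open Real

theorem stmt5 (l1 l2 : ℝ) (hl1 : 0 < l1) (hl2 : 0 < l2) (hne : l1 ≠ l2)
    (α₁ α₂ : ℝ → ℝ)
    (hα₁ : ∀ t, HasDerivAt α₁
      ((l1 * Real.cos (α₁ t - α₂ t) - l2) / (l1 ^ 2 * l2)) t)
    (hα₂ : ∀ t, HasDerivAt α₂
      (-(l2 * Real.cos (α₁ t - α₂ t) - l1) / (l1 * l2 ^ 2)) t)
    (hpos : ∀ t, 0 < l1 ^ 2 + l2 ^ 2 - 2 * l1 * l2 * Real.cos (α₁ t - α₂ t))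
    -- the speed `S` and the arc-length function `s` with `s' = S`, `s 0 = 0`
    (S : ℝ → ℝ)
    (hS : ∀ t, S t = Real.sqrt
      ((l1 ^ 2 + l2 ^ 2 - 2 * l1 * l2 * Real.cos (α₁ t - α₂ t)) / (l1 ^ 2 * l2 ^ 2)))
    (s : ℝ → ℝ) (hs0 : s 0 = 0) (hs : ∀ t, HasDerivAt s (S t) t)
    -- `σ` inverts the arc-length function, so `κ ∘ σ` is the curvature
    -- as a function of arc length
    (σ : ℝ → ℝ) (hσ : ∀ u, s (σ u) = u)
    (κ : ℝ → ℝ)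
    (hκ : ∀ t, κ t = (l1 ^ 2 - l2 ^ 2) /
      (l1 * l2 * Real.sqrt (l1 ^ 2 + l2 ^ 2 - 2 * l1 * l2 * Real.cos (α₁ t - α₂ t)))) :
    ∀ u, deriv (deriv (κ ∘ σ)) u + (κ ∘ σ) u ^ 3 / 2 +
      (-(l1 ^ 2 + l2 ^ 2) / (2 * l1 ^ 2 * l2 ^ 2)) * (κ ∘ σ) u = 0 := by
  have hl1' : l1 ≠ 0 := hl1.ne'
  have hl2' : l2 ≠ 0 := hl2.ne'
  have hl12 : l1 * l2 ≠ 0 := mul_ne_zero hl1' hl2'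
  set Q : ℝ → ℝ := fun t => l1 ^ 2 + l2 ^ 2 - 2 * l1 * l2 * Real.cos (α₁ t - α₂ t)
    with hQdef
  have hQpos : ∀ t, 0 < Q t := hpos
  have hQne : ∀ t, Q t ≠ 0 := fun t => (hQpos t).ne'
  have hrpos : ∀ t, 0 < Real.sqrt (Q t) := fun t => Real.sqrt_pos.2 (hQpos t)
  have hrne : ∀ t, Real.sqrt (Q t) ≠ 0 := fun t => (hrpos t).ne'
  have hr2 : ∀ t, Real.sqrt (Q t) ^ 2 = Q t := fun t => Real.sq_sqrt (hQpos t).le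
  -- nicer form of S
  have hSval : ∀ t, S t = Real.sqrt (Q t) / (l1 * l2) := by
    intro t
    rw [hS t, show l1 ^ 2 * l2 ^ 2 = (l1 * l2) ^ 2 by ring,
      Real.sqrt_div (hQpos t).le, Real.sqrt_sq (mul_pos hl1 hl2).le]
  have hSpos : ∀ t, 0 < S t := fun t => by
    rw [hSval t]; exact div_pos (hrpos t) (mul_pos hl1 hl2)
  -- derivative of θ = α₁ - α₂
  have hθ : ∀ t, HasDerivAt (fun t => α₁ t - α₂ t) (-(Q t) / (l1 ^ 2 * l2 ^ 2)) t := by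
    intro t
    have h := (hα₁ t).sub (hα₂ t)
    refine h.congr_deriv ?_
    simp only [hQdef]
    field_simp
    ring
  -- derivative of Q
  have hQ' : ∀ t, HasDerivAt Q
      (-2 * Real.sin (α₁ t - α₂ t) * Q t / (l1 * l2)) t := by
    intro t
    have h := ((hθ t).cos.const_mul (2 * l1 * l2))
    have h2 : HasDerivAt Q
        (0 - 2 * l1 * l2 * (-Real.sin (α₁ t - α₂ t) * (-(Q t) / (l1 ^ 2 * l2 ^ 2)))) t :=
      (hasDerivAt_const t (l1 ^ 2 + l2 ^ 2)).sub h
    convert h2 using 1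
    field_simp
    ring
  -- derivative of sqrt ∘ Q
  have hR : ∀ t, HasDerivAt (fun t => Real.sqrt (Q t))
      (-Real.sin (α₁ t - α₂ t) * Real.sqrt (Q t) / (l1 * l2)) t := by
    intro t
    have h := (hQ' t).sqrt (hQne t)
    convert h using 1
    have h0 := hrne t
    have h1 := hr2 t
    set r := Real.sqrt (Q t)
    rw [← h1]
    field_simp
  -- derivative of κ
  have hκ' : ∀ t, HasDerivAt κ
      ((l1 ^ 2 - l2 ^ 2) * Real.sin (α₁ t - α₂ t) / (l1 ^ 2 * l2 ^ 2 * Real.sqrt (Q t))) t := by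
    intro t
    have hD : HasDerivAt (fun t => l1 * l2 * Real.sqrt (Q t))
        (l1 * l2 * (-Real.sin (α₁ t - α₂ t) * Real.sqrt (Q t) / (l1 * l2))) t :=
      (hR t).const_mul (l1 * l2)
    have h := (hasDerivAt_const t (l1 ^ 2 - l2 ^ 2)).div hD
        (mul_ne_zero hl12 (hrne t))
    have h2 : HasDerivAt κ
        ((0 * (l1 * l2 * Real.sqrt (Q t)) - (l1 ^ 2 - l2 ^ 2) *
          (l1 * l2 * (-Real.sin (α₁ t - α₂ t) * Real.sqrt (Q t) / (l1 * l2)))) /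
          (l1 * l2 * Real.sqrt (Q t)) ^ 2) t :=
      h.congr_of_eventuallyEq (Filter.Eventually.of_forall hκ)
    convert h2 using 1
    have h0 := hrne t
    field_simp
    ring
  -- σ is differentiable
  have hsmono : StrictMono s := strictMono_of_deriv_pos fun t => by
    rw [(hs t).deriv]; exact hSpos t
  have hσmono : Monotone σ := by
    intro a b hab
    by_contra hlt
    push_neg at hlt
    have := hsmono hlt
    rw [hσ a, hσ b] at this
    exact absurd this (not_lt.2 hab)
  have hσsurj : Function.Surjective σ := fun t => ⟨s t, hsmono.injective (by rw [hσ])⟩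
  have hσcont : Continuous σ := hσmono.continuous_of_surjective hσsurj
  have hσd : ∀ u, HasDerivAt σ (S (σ u))⁻¹ u := fun u =>
    HasDerivAt.of_local_left_inverse hσcont.continuousAt (hs (σ u)) (hSpos (σ u)).ne'
      (Filter.Eventually.of_forall hσ)
  -- first derivative of κ ∘ σ
  have hκσ : ∀ u, HasDerivAt (κ ∘ σ)
      ((l1 ^ 2 - l2 ^ 2) * Real.sin (α₁ (σ u) - α₂ (σ u)) / (l1 * l2 * Q (σ u))) u := by
    intro u
    have h := (hκ' (σ u)).comp u (hσd u)
    refine h.congr_deriv ?_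
    rw [hSval (σ u)]
    have h0 := hrne (σ u)
    have h1 := hr2 (σ u)
    set r := Real.sqrt (Q (σ u))
    rw [← h1]
    field_simp
  have hd1 : deriv (κ ∘ σ) = fun u =>
      (l1 ^ 2 - l2 ^ 2) * Real.sin (α₁ (σ u) - α₂ (σ u)) / (l1 * l2 * Q (σ u)) :=
    funext fun u => (hκσ u).deriv
  -- derivative of g = κ' as a function of t
  have hg : ∀ t, HasDerivAt (fun t =>
      (l1 ^ 2 - l2 ^ 2) * Real.sin (α₁ t - α₂ t) / (l1 * l2 * Q t))
      (((l1 ^ 2 - l2 ^ 2) * (Real.cos (α₁ t - α₂ t) * (-(Q t) / (l1 ^ 2 * l2 ^ 2))) *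
          (l1 * l2 * Q t) -
        (l1 ^ 2 - l2 ^ 2) * Real.sin (α₁ t - α₂ t) *
          (l1 * l2 * (-2 * Real.sin (α₁ t - α₂ t) * Q t / (l1 * l2)))) /
        (l1 * l2 * Q t) ^ 2) t := by
    intro t
    exact (((hθ t).sin.const_mul (l1 ^ 2 - l2 ^ 2)).div ((hQ' t).const_mul (l1 * l2))
      (mul_ne_zero hl12 (hQne t)))
  -- second derivative
  intro u
  have hd2 : HasDerivAt (deriv (κ ∘ σ))
      ((((l1 ^ 2 - l2 ^ 2) * (Real.cos (α₁ (σ u) - α₂ (σ u)) * (-(Q (σ u)) / (l1 ^ 2 * l2 ^ 2))) *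
          (l1 * l2 * Q (σ u)) -
        (l1 ^ 2 - l2 ^ 2) * Real.sin (α₁ (σ u) - α₂ (σ u)) *
          (l1 * l2 * (-2 * Real.sin (α₁ (σ u) - α₂ (σ u)) * Q (σ u) / (l1 * l2)))) /
        (l1 * l2 * Q (σ u)) ^ 2) * (S (σ u))⁻¹) u := by
    rw [hd1]
    exact (hg (σ u)).comp u (hσd u)
  rw [hd2.deriv]
  have hκval : (κ ∘ σ) u = (l1 ^ 2 - l2 ^ 2) / (l1 * l2 * Real.sqrt (Q (σ u))) := hκ (σ u)
  rw [hκval, hSval (σ u)]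
  set t := σ u
  set c := Real.cos (α₁ t - α₂ t) with hc
  set sn := Real.sin (α₁ t - α₂ t) with hsn
  set r := Real.sqrt (Q t) with hr
  have h1 : r ^ 2 = Q t := hr2 t
  have h2 : sn ^ 2 = 1 - c ^ 2 := by
    rw [hsn, hc, Real.sin_sq]
  have h3 : Q t = l1 ^ 2 + l2 ^ 2 - 2 * l1 * l2 * c := rfl
  have hrne' : r ≠ 0 := hrne t
  rw [h3] at h1
  rw [show Q t = r ^ 2 from (hr2 t).symm]
  field_simp
  rw [h1, h2]
  ring
end

section
/- Let ℓ₁, ℓ₂ > 0, and let (x₁, x₂, α₁, α₂, p₁, p₂, η₁, η₂) be a solution of the Hamiltonian system with H = ½(L₁² + L₂²) where L₁ = p₁ - (η₁/ℓ₁) sin α₁ - (η₂/ℓ₂) sin α₂ and L₂ = p₂ + (η₁/ℓ₁) cos α₁ + (η₂/ℓ₂) cos α₂, restricted to H = ½, so that L₁ = cos γ, L₂ = sin γ for a differentiable function γ. Then the curvature κ = γ' of the curve (x₁, x₂) equals η₁/ℓ₁² + η₂/ℓ₂². -/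
/-! The Hamiltonian equations give each term `(ηᵢ/ℓᵢ) (cos αᵢ, sin αᵢ)` the derivative
`(ηᵢ/ℓᵢ²) (cos γ, sin γ)`, by the addition formulas for `(γ - αᵢ) + αᵢ`. Differentiating the
constraints therefore gives `(cos γ, sin γ)' = κ (-sin γ, cos γ)` with `κ = η₁/ℓ₁² + η₂/ℓ₂²`, and since
`(cos γ, sin γ)' = γ' (-sin γ, cos γ)` is a unit vector times `γ'`, we get `γ' = κ`. -/

open Real

section Link

variable {α η γ : ℝ → ℝ} {ℓ t : ℝ}

theorem hasDerivAt_link_cos (hα : HasDerivAt α (sin (γ t - α t) / ℓ) t)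
    (hη : HasDerivAt η (η t * cos (γ t - α t) / ℓ) t) :
    HasDerivAt (fun s => η s / ℓ * cos (α s)) (η t / ℓ ^ 2 * cos (γ t)) t := by
  refine ((hη.div_const ℓ).mul hα.cos).congr_deriv ?_
  have hγ : cos (γ t) = cos (γ t - α t + α t) := by rw [sub_add_cancel]
  rw [hγ, cos_add]
  ring

theorem hasDerivAt_link_sin (hα : HasDerivAt α (sin (γ t - α t) / ℓ) t)
    (hη : HasDerivAt η (η t * cos (γ t - α t) / ℓ) t) :
    HasDerivAt (fun s => η s / ℓ * sin (α s)) (η t / ℓ ^ 2 * sin (γ t)) t := by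
  refine ((hη.div_const ℓ).mul hα.sin).congr_deriv ?_
  have hγ : sin (γ t) = sin (γ t - α t + α t) := by rw [sub_add_cancel]
  rw [hγ, sin_add]
  ring

end Link

theorem deriv_eq_of_hasDerivAt_cos_sin {γ : ℝ → ℝ} {k t : ℝ} (hγ : DifferentiableAt ℝ γ t)
    (hcos : HasDerivAt (fun s => cos (γ s)) (-(k * sin (γ t))) t)
    (hsin : HasDerivAt (fun s => sin (γ s)) (k * cos (γ t)) t) :
    deriv γ t = k := by
  have hc := hcos.unique hγ.hasDerivAt.cos
  have hs := hsin.unique hγ.hasDerivAt.sin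
  linear_combination sin (γ t) * hc - cos (γ t) * hs - (deriv γ t - k) * sin_sq_add_cos_sq (γ t)

theorem stmt6_general (l1 l2 : ℝ)
    (α₁ α₂ η₁ η₂ γ : ℝ → ℝ) (p₁ p₂ : ℝ)
    -- the constraints `L₁ = cos γ`, `L₂ = sin γ` (so `H = ½`)
    (hL₁ : ∀ t, Real.cos (γ t) =
      p₁ - η₁ t / l1 * Real.sin (α₁ t) - η₂ t / l2 * Real.sin (α₂ t))
    (hL₂ : ∀ t, Real.sin (γ t) =
      p₂ + η₁ t / l1 * Real.cos (α₁ t) + η₂ t / l2 * Real.cos (α₂ t))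
    -- the Hamiltonian equations
    (hα₁ : ∀ t, HasDerivAt α₁ (Real.sin (γ t - α₁ t) / l1) t)
    (hα₂ : ∀ t, HasDerivAt α₂ (Real.sin (γ t - α₂ t) / l2) t)
    (hη₁ : ∀ t, HasDerivAt η₁ (η₁ t * Real.cos (γ t - α₁ t) / l1) t)
    (hη₂ : ∀ t, HasDerivAt η₂ (η₂ t * Real.cos (γ t - α₂ t) / l2) t)
    (hγ : Differentiable ℝ γ) :
    -- the curvature `κ = γ'` of the curve `(x₁, x₂)` equals `η₁/ℓ₁² + η₂/ℓ₂²`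
    ∀ t, deriv γ t = η₁ t / l1 ^ 2 + η₂ t / l2 ^ 2 := by
  intro t
  apply deriv_eq_of_hasDerivAt_cos_sin (hγ t)
  · rw [show (fun s => cos (γ s)) = _ from funext hL₁]
    refine (((hasDerivAt_link_sin (hα₁ t) (hη₁ t)).const_sub p₁).sub
      (hasDerivAt_link_sin (hα₂ t) (hη₂ t))).congr_deriv ?_
    ring
  · rw [show (fun s => sin (γ s)) = _ from funext hL₂]
    refine (((hasDerivAt_link_cos (hα₁ t) (hη₁ t)).const_add p₂).add
      (hasDerivAt_link_cos (hα₂ t) (hη₂ t))).congr_deriv ?_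
    ring

theorem stmt6 (l1 l2 : ℝ) (hl1 : 0 < l1) (hl2 : 0 < l2)
    (x₁ x₂ α₁ α₂ η₁ η₂ γ : ℝ → ℝ) (p₁ p₂ : ℝ)
    -- the constraints `L₁ = cos γ`, `L₂ = sin γ` (so `H = ½`)
    (hL₁ : ∀ t, Real.cos (γ t) =
      p₁ - η₁ t / l1 * Real.sin (α₁ t) - η₂ t / l2 * Real.sin (α₂ t))
    (hL₂ : ∀ t, Real.sin (γ t) =
      p₂ + η₁ t / l1 * Real.cos (α₁ t) + η₂ t / l2 * Real.cos (α₂ t))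
    -- the Hamiltonian equations
    (hx₁ : ∀ t, HasDerivAt x₁ (Real.cos (γ t)) t)
    (hx₂ : ∀ t, HasDerivAt x₂ (Real.sin (γ t)) t)
    (hα₁ : ∀ t, HasDerivAt α₁ (Real.sin (γ t - α₁ t) / l1) t)
    (hα₂ : ∀ t, HasDerivAt α₂ (Real.sin (γ t - α₂ t) / l2) t)
    (hη₁ : ∀ t, HasDerivAt η₁ (η₁ t * Real.cos (γ t - α₁ t) / l1) t)
    (hη₂ : ∀ t, HasDerivAt η₂ (η₂ t * Real.cos (γ t - α₂ t) / l2) t)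
    (hγ : Differentiable ℝ γ) :
    -- the curvature `κ = γ'` of the curve `(x₁, x₂)` equals `η₁/ℓ₁² + η₂/ℓ₂²`
    ∀ t, deriv γ t = η₁ t / l1 ^ 2 + η₂ t / l2 ^ 2 :=
  stmt6_general l1 l2 α₁ α₂ η₁ η₂ γ p₁ p₂ hL₁ hL₂ hα₁ hα₂ hη₁ hη₂ hγ
end

section
/- Under the same hypotheses, κ' = (η₁ cos(γ - α₁))/ℓ₁³ + (η₂ cos(γ - α₂))/ℓ₂³ and κ'' = η₁/ℓ₁⁴ + η₂/ℓ₂⁴ - κ·[η₁ sin(γ - α₁)/ℓ₁³ + η₂ sin(γ - α₂)/ℓ₂³], where κ = η₁/ℓ₁² + η₂/ℓ₂². -/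
/-!
Along a trajectory, the products `ηᵢ/ℓᵢ · (sin αᵢ, cos αᵢ)` have derivative
`ηᵢ/ℓᵢ² · (sin γ, cos γ)`, so differentiating the constraints `L₁ = cos γ`, `L₂ = sin γ`
gives `(cos γ, sin γ)' = κ · (-sin γ, cos γ)`, i.e. `γ' = κ`. Both formulas then follow by
differentiating `κ` term by term, with `(γ - αᵢ)' = κ - sin (γ - αᵢ)/ℓᵢ`.
-/

open Real

/- `α' = sin (g - α)/l` is the equation of the heading `α` of a trailer of length `l`
towed in direction `g`. -/
section Trailer

variable {l : ℝ} {α η : ℝ → ℝ} {t : ℝ}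

theorem hasDerivAt_div_mul_sin_of_trailer (g : ℝ)
    (hα : HasDerivAt α (sin (g - α t) / l) t)
    (hη : HasDerivAt η (η t * cos (g - α t) / l) t) :
    HasDerivAt (fun s => η s / l * sin (α s)) (η t / l ^ 2 * sin g) t := by
  refine ((hη.div_const l).mul hα.sin).congr_deriv ?_
  conv_rhs => rw [← sub_add_cancel g (α t), sin_add]
  ring

theorem hasDerivAt_div_mul_cos_of_trailer (g : ℝ)
    (hα : HasDerivAt α (sin (g - α t) / l) t)
    (hη : HasDerivAt η (η t * cos (g - α t) / l) t) :
    HasDerivAt (fun s => η s / l * cos (α s)) (η t / l ^ 2 * cos g) t := by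
  refine ((hη.div_const l).mul hα.cos).congr_deriv ?_
  conv_rhs => rw [← sub_add_cancel g (α t), cos_add]
  ring

theorem hasDerivAt_mul_cos_sub_of_trailer {γ : ℝ → ℝ} {k : ℝ} (hγ : HasDerivAt γ k t)
    (hα : HasDerivAt α (sin (γ t - α t) / l) t)
    (hη : HasDerivAt η (η t * cos (γ t - α t) / l) t) :
    HasDerivAt (fun s => η s * cos (γ s - α s) / l ^ 3)
      (η t / l ^ 4 - k * (η t * sin (γ t - α t) / l ^ 3)) t := by
  refine ((hη.mul (hγ.sub hα).cos).div_const (l ^ 3)).congr_deriv ?_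
  linear_combination (η t / l ^ 4) * sin_sq_add_cos_sq (γ t - α t)

end Trailer

theorem eq_of_hasDerivAt_cos_sin {γ : ℝ → ℝ} {g k t : ℝ} (hγ : HasDerivAt γ g t)
    (hcos : HasDerivAt (fun s => cos (γ s)) (-(k * sin (γ t))) t)
    (hsin : HasDerivAt (fun s => sin (γ s)) (k * cos (γ t)) t) : g = k := by
  have hc := hγ.cos.unique hcos
  have hs := hγ.sin.unique hsin
  linear_combination
    (-sin (γ t)) * hc + cos (γ t) * hs + (k - g) * sin_sq_add_cos_sq (γ t)

theorem stmt7_general (l1 l2 : ℝ)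
    (α₁ α₂ η₁ η₂ γ : ℝ → ℝ) (p₁ p₂ : ℝ)
    (hL₁ : ∀ t, Real.cos (γ t) =
      p₁ - η₁ t / l1 * Real.sin (α₁ t) - η₂ t / l2 * Real.sin (α₂ t))
    (hL₂ : ∀ t, Real.sin (γ t) =
      p₂ + η₁ t / l1 * Real.cos (α₁ t) + η₂ t / l2 * Real.cos (α₂ t))
    (hα₁ : ∀ t, HasDerivAt α₁ (Real.sin (γ t - α₁ t) / l1) t)
    (hα₂ : ∀ t, HasDerivAt α₂ (Real.sin (γ t - α₂ t) / l2) t)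
    (hη₁ : ∀ t, HasDerivAt η₁ (η₁ t * Real.cos (γ t - α₁ t) / l1) t)
    (hη₂ : ∀ t, HasDerivAt η₂ (η₂ t * Real.cos (γ t - α₂ t) / l2) t)
    (hγ : Differentiable ℝ γ)
    (κ : ℝ → ℝ) (hκ : ∀ t, κ t = η₁ t / l1 ^ 2 + η₂ t / l2 ^ 2) :
    (∀ t, deriv κ t =
      η₁ t * Real.cos (γ t - α₁ t) / l1 ^ 3 + η₂ t * Real.cos (γ t - α₂ t) / l2 ^ 3) ∧
    (∀ t, deriv (deriv κ) t =
      η₁ t / l1 ^ 4 + η₂ t / l2 ^ 4 -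
        κ t * (η₁ t * Real.sin (γ t - α₁ t) / l1 ^ 3 +
               η₂ t * Real.sin (γ t - α₂ t) / l2 ^ 3)) := by
  have hγ' : ∀ t, HasDerivAt γ (κ t) t := fun t => by
    have hcos : HasDerivAt (fun s => cos (γ s)) (-(κ t * sin (γ t))) t := by
      rw [funext hL₁, hκ]
      exact (((hasDerivAt_const t p₁).sub
        (hasDerivAt_div_mul_sin_of_trailer _ (hα₁ t) (hη₁ t))).sub
        (hasDerivAt_div_mul_sin_of_trailer _ (hα₂ t) (hη₂ t))).congr_deriv (by ring)
    have hsin : HasDerivAt (fun s => sin (γ s)) (κ t * cos (γ t)) t := by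
      rw [funext hL₂, hκ]
      exact (((hasDerivAt_const t p₂).add
        (hasDerivAt_div_mul_cos_of_trailer _ (hα₁ t) (hη₁ t))).add
        (hasDerivAt_div_mul_cos_of_trailer _ (hα₂ t) (hη₂ t))).congr_deriv (by ring)
    have hdγ := (hγ t).hasDerivAt
    rwa [eq_of_hasDerivAt_cos_sin hdγ hcos hsin] at hdγ
  have hκ' : ∀ t, deriv κ t =
      η₁ t * cos (γ t - α₁ t) / l1 ^ 3 + η₂ t * cos (γ t - α₂ t) / l2 ^ 3 := fun t => by
    rw [funext hκ]
    exact ((((hη₁ t).div_const (l1 ^ 2)).add ((hη₂ t).div_const (l2 ^ 2))).congr_deriv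
      (by ring)).deriv
  refine ⟨hκ', fun t => ?_⟩
  rw [funext hκ']
  exact ((hasDerivAt_mul_cos_sub_of_trailer (hγ' t) (hα₁ t) (hη₁ t)).add
    (hasDerivAt_mul_cos_sub_of_trailer (hγ' t) (hα₂ t) (hη₂ t))).deriv.trans (by ring)

theorem stmt7 (l1 l2 : ℝ) (hl1 : 0 < l1) (hl2 : 0 < l2)
    (x₁ x₂ α₁ α₂ η₁ η₂ γ : ℝ → ℝ) (p₁ p₂ : ℝ)
    (hL₁ : ∀ t, Real.cos (γ t) =
      p₁ - η₁ t / l1 * Real.sin (α₁ t) - η₂ t / l2 * Real.sin (α₂ t))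
    (hL₂ : ∀ t, Real.sin (γ t) =
      p₂ + η₁ t / l1 * Real.cos (α₁ t) + η₂ t / l2 * Real.cos (α₂ t))
    (hx₁ : ∀ t, HasDerivAt x₁ (Real.cos (γ t)) t)
    (hx₂ : ∀ t, HasDerivAt x₂ (Real.sin (γ t)) t)
    (hα₁ : ∀ t, HasDerivAt α₁ (Real.sin (γ t - α₁ t) / l1) t)
    (hα₂ : ∀ t, HasDerivAt α₂ (Real.sin (γ t - α₂ t) / l2) t)
    (hη₁ : ∀ t, HasDerivAt η₁ (η₁ t * Real.cos (γ t - α₁ t) / l1) t)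
    (hη₂ : ∀ t, HasDerivAt η₂ (η₂ t * Real.cos (γ t - α₂ t) / l2) t)
    (hγ : Differentiable ℝ γ)
    (κ : ℝ → ℝ) (hκ : ∀ t, κ t = η₁ t / l1 ^ 2 + η₂ t / l2 ^ 2) :
    (∀ t, deriv κ t =
      η₁ t * Real.cos (γ t - α₁ t) / l1 ^ 3 + η₂ t * Real.cos (γ t - α₂ t) / l2 ^ 3) ∧
    (∀ t, deriv (deriv κ) t =
      η₁ t / l1 ^ 4 + η₂ t / l2 ^ 4 -
        κ t * (η₁ t * Real.sin (γ t - α₁ t) / l1 ^ 3 +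
               η₂ t * Real.sin (γ t - α₂ t) / l2 ^ 3)) :=
  stmt7_general l1 l2 α₁ α₂ η₁ η₂ γ p₁ p₂ hL₁ hL₂ hα₁ hα₂ hη₁ hη₂ hγ κ hκ
end

section
/- Let γ, α₁, α₂ : ℝ → ℝ be differentiable with α₁' = sin(γ - α₁), α₂' = sin(γ - α₂), and suppose κ := γ' satisfies κ' = p₁ sin γ - p₂ cos γ (equivalently -p₁ sin γ + p₂ cos γ = -κ'). Define f(t) = γ'(t) - [sin(γ - (α₁+α₂)/2) + p₁ sin((α₁+α₂)/2) - p₂ cos((α₁+α₂)/2)] / cos((α₂-α₁)/2). If cos((α₂-α₁)/2) never vanishes and f(0) = 0, then f(t) = 0 for all t. -/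
open Real

private lemma key (x u v k p₁ p₂ : ℝ) (hv : Real.cos v ≠ 0) :
    (p₁ * Real.sin (x + u) - p₂ * Real.cos (x + u)) -
      (((Real.cos x * (k - (Real.sin (x + v) + Real.sin (x - v)) / 2)
          + p₁ * (Real.cos u * ((Real.sin (x + v) + Real.sin (x - v)) / 2)))
          - p₂ * (-Real.sin u * ((Real.sin (x + v) + Real.sin (x - v)) / 2))) * Real.cos v
        - (Real.sin x + p₁ * Real.sin u - p₂ * Real.cos u)
            * (-Real.sin v * ((Real.sin (x - v) - Real.sin (x + v)) / 2))) / Real.cos v ^ 2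
    = -(Real.cos x / Real.cos v)
        * (k - (Real.sin x + p₁ * Real.sin u - p₂ * Real.cos u) / Real.cos v) := by
  simp only [Real.sin_add, Real.sin_sub, Real.cos_add, Real.cos_sub]
  field_simp
  linear_combination 2 * (Real.sin x + p₁ * Real.sin u - p₂ * Real.cos u) * Real.cos x * (Real.sin_sq_add_cos_sq v)

theorem stmt10 (γ α₁ α₂ κ : ℝ → ℝ) (p₁ p₂ : ℝ)
    (hγ : ∀ t, HasDerivAt γ (κ t) t)
    (hα₁ : ∀ t, HasDerivAt α₁ (Real.sin (γ t - α₁ t)) t)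
    (hα₂ : ∀ t, HasDerivAt α₂ (Real.sin (γ t - α₂ t)) t)
    (hκ : ∀ t, HasDerivAt κ (p₁ * Real.sin (γ t) - p₂ * Real.cos (γ t)) t)
    (hcos : ∀ t, Real.cos ((α₂ t - α₁ t) / 2) ≠ 0)
    (f : ℝ → ℝ)
    (hf : ∀ t, f t = κ t -
      (Real.sin (γ t - (α₁ t + α₂ t) / 2) + p₁ * Real.sin ((α₁ t + α₂ t) / 2)
        - p₂ * Real.cos ((α₁ t + α₂ t) / 2)) / Real.cos ((α₂ t - α₁ t) / 2))
    (hf0 : f 0 = 0) :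
    ∀ t, f t = 0 := by
  -- f satisfies f' = -g * f
  have hf' : ∀ t, HasDerivAt f
      (-(Real.cos (γ t - (α₁ t + α₂ t) / 2) / Real.cos ((α₂ t - α₁ t) / 2)) * f t) t := by
    intro t
    have hm : HasDerivAt (fun t => (α₁ t + α₂ t) / 2)
        ((Real.sin (γ t - α₁ t) + Real.sin (γ t - α₂ t)) / 2) t :=
      ((hα₁ t).add (hα₂ t)).div_const 2
    have hd : HasDerivAt (fun t => (α₂ t - α₁ t) / 2)
        ((Real.sin (γ t - α₂ t) - Real.sin (γ t - α₁ t)) / 2) t :=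
      ((hα₂ t).sub (hα₁ t)).div_const 2
    have hx : HasDerivAt (fun t => γ t - (α₁ t + α₂ t) / 2)
        (κ t - (Real.sin (γ t - α₁ t) + Real.sin (γ t - α₂ t)) / 2) t := (hγ t).sub hm
    have hN := (hx.sin.add (hm.sin.const_mul p₁)).sub (hm.cos.const_mul p₂)
    have hC := hd.cos
    have H := ((hκ t).sub (hN.div hC (hcos t))).congr_of_eventuallyEq
      (Filter.Eventually.of_forall hf)
    refine H.congr_deriv (Eq.symm ?_)
    rw [hf t]
    have e1 : γ t - α₁ t = (γ t - (α₁ t + α₂ t) / 2) + (α₂ t - α₁ t) / 2 := by ring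
    have e2 : γ t - α₂ t = (γ t - (α₁ t + α₂ t) / 2) - (α₂ t - α₁ t) / 2 := by ring
    have e3 : γ t = (γ t - (α₁ t + α₂ t) / 2) + (α₁ t + α₂ t) / 2 := by ring
    have K := key (γ t - (α₁ t + α₂ t) / 2) ((α₁ t + α₂ t) / 2) ((α₂ t - α₁ t) / 2)
      (κ t) p₁ p₂ (hcos t)
    rw [← e1, ← e2, ← e3] at K
    exact K.symm
  -- g is continuous
  have cγ : Continuous γ := Differentiable.continuous fun t => (hγ t).differentiableAt
  have cα₁ : Continuous α₁ := Differentiable.continuous fun t => (hα₁ t).differentiableAt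
  have cα₂ : Continuous α₂ := Differentiable.continuous fun t => (hα₂ t).differentiableAt
  set g : ℝ → ℝ := fun t => Real.cos (γ t - (α₁ t + α₂ t) / 2) / Real.cos ((α₂ t - α₁ t) / 2)
    with hg
  have hgc : Continuous g :=
    (Real.continuous_cos.comp (cγ.sub ((cα₁.add cα₂).div_const 2))).div
      (Real.continuous_cos.comp ((cα₂.sub cα₁).div_const 2)) hcos
  set G : ℝ → ℝ := fun t => ∫ s in (0:ℝ)..t, g s with hG
  have hG' : ∀ t, HasDerivAt G (g t) t := fun t =>
    (hgc.integral_hasStrictDerivAt 0 t).hasDerivAt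
  have hh : ∀ t, HasDerivAt (fun t => f t * Real.exp (G t)) 0 t := by
    intro t
    have := (hf' t).mul ((hG' t).exp)
    refine this.congr_deriv ?_
    ring
  have hconst : ∀ t, f t * Real.exp (G t) = f 0 * Real.exp (G 0) := by
    intro t
    have : (fun t => f t * Real.exp (G t)) t = (fun t => f t * Real.exp (G t)) 0 :=
      is_const_of_deriv_eq_zero (fun t => (hh t).differentiableAt)
        (fun t => (hh t).deriv) t 0
    simpa using this
  intro t
  have := hconst t
  rw [hf0, zero_mul] at this
  exact (mul_eq_zero.mp this).resolve_right (Real.exp_ne_zero _)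
end

section
/- Let γ : ℝ → ℝ² be a smooth unit-speed plane curve with Frenet frame (T, N) and curvature κ, let L > 0, and let β : ℝ → ℝ be differentiable. Define γ̃(t) = γ(t) + L(cos β(t) T(t) + sin β(t) N(t)). Then |γ̃'(t)| = 1 for all t if and only if for all t, (β'(t) + κ(t))·(L β'(t) + L κ(t) - 2 sin β(t)) = 0. -/
open Real

theorem stmt11 (γ T N : ℝ → ℝ × ℝ) (κ β β' : ℝ → ℝ) (L : ℝ) (hL : 0 < L)
    -- `γ` is a smooth unit-speed plane curve with Frenet frame `(T, N)`
    (hγ : ∀ t, HasDerivAt γ (T t) t)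
    (hT : ∀ t, (T t).1 ^ 2 + (T t).2 ^ 2 = 1)
    (hN : ∀ t, N t = (-(T t).2, (T t).1))
    (hFrenet : ∀ t, HasDerivAt T (κ t • N t) t)
    (hβ : ∀ t, HasDerivAt β (β' t) t)
    (γ' : ℝ → ℝ × ℝ)
    (hγ' : γ' = fun t => γ t + L • (Real.cos (β t) • T t + Real.sin (β t) • N t)) :
    (∀ t, (deriv γ' t).1 ^ 2 + (deriv γ' t).2 ^ 2 = 1) ↔
      (∀ t, (β' t + κ t) * (L * β' t + L * κ t - 2 * Real.sin (β t)) = 0) := by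
  -- derivative of N
  have hN' : ∀ t, HasDerivAt N ((-κ t) • T t) t := by
    intro t
    have h1 : HasDerivAt (fun s => (T s).1) (κ t • N t).1 t := (hFrenet t).fst
    have h2 : HasDerivAt (fun s => (T s).2) (κ t • N t).2 t := (hFrenet t).snd
    have h3 : HasDerivAt (fun s => (-(T s).2, (T s).1)) (-(κ t • N t).2, (κ t • N t).1) t :=
      HasDerivAt.prodMk (h2.neg) h1
    have heq : (fun s => (-(T s).2, (T s).1)) = N := by
      funext s; rw [hN s]
    rw [heq] at h3
    convert h3 using 1
    rw [hN t]
    simp only [Prod.ext_iff, Prod.smul_mk, Prod.mk.injEq, smul_eq_mul, smul_neg,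
      Prod.smul_fst, Prod.smul_snd, Prod.fst_neg, Prod.snd_neg]
    constructor <;> ring
  have hc : ∀ t, HasDerivAt (fun s => Real.cos (β s)) (-Real.sin (β t) * β' t) t := by
    intro t
    exact (Real.hasDerivAt_cos (β t)).comp t (hβ t)
  have hs : ∀ t, HasDerivAt (fun s => Real.sin (β s)) (Real.cos (β t) * β' t) t := by
    intro t
    exact (Real.hasDerivAt_sin (β t)).comp t (hβ t)
  have hD : ∀ t, HasDerivAt γ'
      ((1 - L * Real.sin (β t) * (β' t + κ t)) • T t
        + (L * Real.cos (β t) * (β' t + κ t)) • N t) t := by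
    intro t
    have h1 := (hc t).smul (hFrenet t)
    have h2 := (hs t).smul (hN' t)
    have h4 : HasDerivAt γ'
        (T t + L • (Real.cos (β t) • (κ t • N t) + (-Real.sin (β t) * β' t) • T t
          + (Real.sin (β t) • ((-κ t) • T t) + (Real.cos (β t) * β' t) • N t))) t := by
      rw [hγ']
      exact (hγ t).add ((h1.add h2).const_smul L)
    convert h4 using 1
    rw [hN t]
    simp only [Prod.ext_iff, Prod.smul_mk, Prod.mk.injEq, smul_eq_mul, smul_neg,
      Prod.mk_add_mk, Prod.fst_add, Prod.snd_add, Prod.smul_fst, Prod.smul_snd,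
      neg_neg, mul_neg, neg_mul]
    constructor <;> ring
  constructor
  · intro h t
    have e := h t
    rw [(hD t).deriv] at e
    rw [hN t] at e
    simp only [Prod.smul_mk, Prod.mk_add_mk, smul_eq_mul, mul_neg, Prod.fst_add,
      Prod.snd_add, Prod.smul_fst, Prod.smul_snd] at e
    have hT1 := hT t
    have hsc := Real.sin_sq_add_cos_sq (β t)
    have key : L * ((β' t + κ t) * (L * β' t + L * κ t - 2 * Real.sin (β t))) = 0 := by
      linear_combination e
        - ((1 - L * Real.sin (β t) * (β' t + κ t)) ^ 2
            + (L * Real.cos (β t) * (β' t + κ t)) ^ 2) * hT1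
        - (L * (β' t + κ t)) ^ 2 * hsc
    rcases mul_eq_zero.mp key with h' | h'
    · exact absurd h' (ne_of_gt hL)
    · exact h'
  · intro h t
    have e := h t
    rw [(hD t).deriv]
    rw [hN t]
    simp only [Prod.smul_mk, Prod.mk_add_mk, smul_eq_mul, mul_neg, Prod.fst_add,
      Prod.snd_add, Prod.smul_fst, Prod.smul_snd]
    have hT1 := hT t
    have hsc := Real.sin_sq_add_cos_sq (β t)
    linear_combination ((1 - L * Real.sin (β t) * (β' t + κ t)) ^ 2
        + (L * Real.cos (β t) * (β' t + κ t)) ^ 2) * hT1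
      + (L * (β' t + κ t)) ^ 2 * hsc + L * e
end

section
/- With γ, β, L as above and with β satisfying β' = -κ + 2 sin(β)/L, the curve γ̃(t) = γ(t) + L(cos β T + sin β N) is unit speed with unit tangent T̃ = cos(2β) T + sin(2β) N, and its curvature equals κ̃ = κ - 4 sin(β)/L (with normal Ñ = sin(2β) T - cos(2β) N satisfying T̃' = κ̃ Ñ). -/
open Real

theorem stmt12 (γ T N : ℝ → ℝ × ℝ) (κ β : ℝ → ℝ) (L : ℝ) (hL : 0 < L)
    -- `γ` is a smooth unit-speed plane curve with Frenet frame `(T, N)`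
    (hγ : ∀ t, HasDerivAt γ (T t) t)
    (hT : ∀ t, (T t).1 ^ 2 + (T t).2 ^ 2 = 1)
    (hN : ∀ t, N t = (-(T t).2, (T t).1))
    (hFrenet : ∀ t, HasDerivAt T (κ t • N t) t)
    -- the bicycle ODE
    (hβ : ∀ t, HasDerivAt β (-κ t + 2 * Real.sin (β t) / L) t)
    (γ' T' N' : ℝ → ℝ × ℝ) (κ' : ℝ → ℝ)
    (hγ' : γ' = fun t => γ t + L • (Real.cos (β t) • T t + Real.sin (β t) • N t))
    (hT' : T' = fun t => Real.cos (2 * β t) • T t + Real.sin (2 * β t) • N t)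
    (hN' : N' = fun t => Real.sin (2 * β t) • T t - Real.cos (2 * β t) • N t)
    (hκ' : κ' = fun t => κ t - 4 * Real.sin (β t) / L) :
    -- `γ'` is unit speed with tangent `T'`, normal `N'` and curvature `κ'`
    (∀ t, HasDerivAt γ' (T' t) t) ∧
    (∀ t, (T' t).1 ^ 2 + (T' t).2 ^ 2 = 1) ∧
    (∀ t, HasDerivAt T' (κ' t • N' t) t) := by
  -- derivative of N
  have hNd : ∀ t, HasDerivAt N ((-κ t) • T t) t := by
    intro t
    have h1 : HasDerivAt (fun t => (T t).1) ((κ t • N t).1) t := by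
      simpa using (hFrenet t).hasFDerivAt.fst.hasDerivAt
    have h2 : HasDerivAt (fun t => (T t).2) ((κ t • N t).2) t := by
      simpa using (hFrenet t).hasFDerivAt.snd.hasDerivAt
    have h3 := HasDerivAt.prodMk (h2.neg) h1
    have hfun : N = fun t => (-(T t).2, (T t).1) := funext hN
    rw [hfun]
    convert h3 using 1
    simp [hN t, Prod.ext_iff]
    simp [hN t, Prod.ext_iff]
  have hβ' : ∀ t, (β t : ℝ) = β t := fun _ => rfl
  constructor
  · intro t
    have hc : HasDerivAt (fun t => Real.cos (β t))
        (-Real.sin (β t) * (-κ t + 2 * Real.sin (β t) / L)) t := (hβ t).cos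
    have hs : HasDerivAt (fun t => Real.sin (β t))
        (Real.cos (β t) * (-κ t + 2 * Real.sin (β t) / L)) t := (hβ t).sin
    have h1 := hc.smul (hFrenet t)
    have h2 := hs.smul (hNd t)
    have h3 := ((h1.add h2).const_smul L).const_add (γ t)
    have h4 : HasDerivAt γ' (T t + L • (Real.cos (β t) • (κ t • N t) +
        (-Real.sin (β t) * (-κ t + 2 * Real.sin (β t) / L)) • T t +
        (Real.sin (β t) • ((-κ t) • T t) +
        (Real.cos (β t) * (-κ t + 2 * Real.sin (β t) / L)) • N t))) t := by
      rw [hγ']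
      exact (hγ t).add ((h1.add h2).const_smul L)
    convert h4 using 1
    have hsc := Real.sin_sq_add_cos_sq (β t)
    simp only [hT', hN t, Real.cos_two_mul, Real.sin_two_mul, Prod.ext_iff,
      Prod.smul_fst, Prod.smul_snd, Prod.fst_add, Prod.snd_add, smul_eq_mul]
    refine ⟨?_, ?_⟩
    · field_simp
      linear_combination 2 * (T t).1 * hsc
    · field_simp
      linear_combination 2 * (T t).2 * hsc
  refine ⟨?_, ?_⟩
  · intro t
    have hsc := Real.sin_sq_add_cos_sq (2 * β t)
    simp only [hT', hN t, Prod.fst_add, Prod.snd_add, Prod.smul_fst, Prod.smul_snd,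
      smul_eq_mul]
    nlinarith [hT t, hsc]
  · intro t
    have hβ2 : HasDerivAt (fun t => 2 * β t)
        (2 * (-κ t + 2 * Real.sin (β t) / L)) t := (hβ t).const_mul 2
    have hc : HasDerivAt (fun t => Real.cos (2 * β t))
        (-Real.sin (2 * β t) * (2 * (-κ t + 2 * Real.sin (β t) / L))) t := hβ2.cos
    have hs : HasDerivAt (fun t => Real.sin (2 * β t))
        (Real.cos (2 * β t) * (2 * (-κ t + 2 * Real.sin (β t) / L))) t := hβ2.sin
    have h1 := hc.smul (hFrenet t)
    have h2 := hs.smul (hNd t)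
    have h4 : HasDerivAt T' (Real.cos (2 * β t) • (κ t • N t) +
        (-Real.sin (2 * β t) * (2 * (-κ t + 2 * Real.sin (β t) / L))) • T t +
        (Real.sin (2 * β t) • ((-κ t) • T t) +
        (Real.cos (2 * β t) * (2 * (-κ t + 2 * Real.sin (β t) / L))) • N t)) t := by
      rw [hT']
      exact h1.add h2
    convert h4 using 1
    simp only [hκ', hN', hN t, Prod.ext_iff, Prod.smul_fst, Prod.smul_snd,
      Prod.fst_add, Prod.snd_add, Prod.fst_sub, Prod.snd_sub, smul_eq_mul]
    constructor <;> · field_simp; ring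
end

section
/- Suppose κ : ℝ → ℝ is smooth and satisfies (κ')² = -Aκ² - ¼κ⁴ - B and κ'' = -Aκ - ½κ³ for constants A, B, and β : ℝ → ℝ satisfies β' = -κ - 2 sin(β)/L for L > 0. Let κ̃ = κ + 4 sin(β)/L. Then κ̃ satisfies c₁ κ̃ + c₂(-κ̃'' - ½κ̃³) + (5/2)κ̃² κ̃'' + (5/2)κ̃ (κ̃')² + (3/8)κ̃⁵ + κ̃'''' = 0, where c₁ = -B/2 - 4A/L² and c₂ = -A + 4/L². -/
open Real

private lemma hda_congr {f : ℝ → ℝ} {f' g' x : ℝ} (h : HasDerivAt f f' x) (e : f' = g') :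
    HasDerivAt f g' x := e ▸ h

theorem stmt13 (κ β : ℝ → ℝ) (A B L : ℝ) (hL : 0 < L)
    (hκsmooth : ContDiff ℝ (⊤ : ℕ∞) κ)
    (h1 : ∀ t, (deriv κ t) ^ 2 = -A * κ t ^ 2 - κ t ^ 4 / 4 - B)
    (h2 : ∀ t, deriv (deriv κ) t = -A * κ t - κ t ^ 3 / 2)
    (hβ : ∀ t, HasDerivAt β (-κ t - 2 * Real.sin (β t) / L) t)
    (κ' : ℝ → ℝ) (hκ' : κ' = fun t => κ t + 4 * Real.sin (β t) / L)
    (c₁ c₂ : ℝ) (hc₁ : c₁ = -B / 2 - 4 * A / L ^ 2) (hc₂ : c₂ = -A + 4 / L ^ 2) :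
    ∀ t, c₁ * κ' t + c₂ * (-(deriv (deriv κ') t) - κ' t ^ 3 / 2) +
      5 / 2 * κ' t ^ 2 * deriv (deriv κ') t + 5 / 2 * κ' t * (deriv κ' t) ^ 2 +
      3 / 8 * κ' t ^ 5 + deriv (deriv (deriv (deriv κ'))) t = 0 := by
  have hu : ∀ t, HasDerivAt κ (deriv κ t) t := fun t => (hκsmooth.differentiable (by simp) t).hasDerivAt
  have hu1 : ∀ t, HasDerivAt (deriv κ) (deriv (deriv κ) t) t := fun t => ((contDiff_infty_iff_deriv.mp (hκsmooth.of_le (by simp))).2.differentiable (by simp) t).hasDerivAt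
  have hd0 : ∀ t, HasDerivAt κ' ((-8 / L ^ 2 : ℝ) * (Real.sin (β t) * Real.cos (β t)) + (1 : ℝ) * (deriv κ t) + (-4 / L : ℝ) * (κ t * Real.cos (β t))) t := by
    intro t
    rw [hκ']
    refine hda_congr ((hu t).add ((((hβ t).sin).const_mul (4:ℝ)).div_const L)) ?_
    ring
  have hd1 : ∀ t, HasDerivAt (fun x => (-8 / L ^ 2 : ℝ) * (Real.sin (β x) * Real.cos (β x)) + (1 : ℝ) * (deriv κ x) + (-4 / L : ℝ) * (κ x * Real.cos (β x))) ((16 / L ^ 3 : ℝ) * (Real.sin (β t)) + (-32 / L ^ 3 : ℝ) * (Real.sin (β t) ^ 3) + (-4 / L : ℝ) * (deriv κ t * Real.cos (β t)) + (8 / L ^ 2 : ℝ) * (κ t) + (-1 * A : ℝ) * (κ t) + (-24 / L ^ 2 : ℝ) * (κ t * Real.sin (β t) ^ 2) + (-4 / L : ℝ) * (κ t ^ 2 * Real.sin (β t)) + (-1/2 : ℝ) * (κ t ^ 3)) t := by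
    intro t
    refine hda_congr ((((((hβ t).sin).mul ((hβ t).cos)).const_mul (-8 / L ^ 2 : ℝ)).add ((hu1 t).const_mul (1 : ℝ))).add (((hu t).mul ((hβ t).cos)).const_mul (-4 / L : ℝ))) ?_
    linear_combination ((1 : ℝ)) * (h2 t) + ((16 / L ^ 3 : ℝ) * (Real.sin (β t)) + (8 / L ^ 2 : ℝ) * (κ t)) * (Real.sin_sq_add_cos_sq (β t))
  have hd2 : ∀ t, HasDerivAt (fun x => (16 / L ^ 3 : ℝ) * (Real.sin (β x)) + (-32 / L ^ 3 : ℝ) * (Real.sin (β x) ^ 3) + (-4 / L : ℝ) * (deriv κ x * Real.cos (β x)) + (8 / L ^ 2 : ℝ) * (κ x) + (-1 * A : ℝ) * (κ x) + (-24 / L ^ 2 : ℝ) * (κ x * Real.sin (β x) ^ 2) + (-4 / L : ℝ) * (κ x ^ 2 * Real.sin (β x)) + (-1/2 : ℝ) * (κ x ^ 3)) ((-32 / L ^ 4 : ℝ) * (Real.sin (β t) * Real.cos (β t)) + (192 / L ^ 4 : ℝ) * (Real.sin (β t) ^ 3 * Real.cos (β t)) + (8 / L ^ 2 : ℝ) *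 (deriv κ t) + (-1 * A : ℝ) * (deriv κ t) + (-32 / L ^ 2 : ℝ) * (deriv κ t * Real.sin (β t) ^ 2) + (-16 / L ^ 3 : ℝ) * (κ t * Real.cos (β t)) + (4 * A / L : ℝ) * (κ t * Real.cos (β t)) + (192 / L ^ 3 : ℝ) * (κ t * Real.sin (β t) ^ 2 * Real.cos (β t)) + (-12 / L : ℝ) * (κ t * deriv κ t * Real.sin (β t)) + (56 / L ^ 2 : ℝ) * (κ t ^ 2 * Real.sin (β t) * Real.cos (β t)) + (-3/2 : ℝ) * (κ t ^ 2 * deriv κ t) + (6 / L : ℝ) * (κ t ^ 3 * Real.cos (β t))) t := by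
    intro t
    refine hda_congr ((((((((((hβ t).sin).const_mul (16 / L ^ 3 : ℝ)).add ((((hβ t).sin).pow 3).const_mul (-32 / L ^ 3 : ℝ))).add (((hu1 t).mul ((hβ t).cos)).const_mul (-4 / L : ℝ))).add ((hu t).const_mul (8 / L ^ 2 : ℝ))).add ((hu t).const_mul (-1 * A : ℝ))).add (((hu t).mul (((hβ t).sin).pow 2)).const_mul (-24 / L ^ 2 : ℝ))).add ((((hu t).pow 2).mul ((hβ t).sin)).const_mul (-4 / L : ℝ))).add (((hu t).pow 3).const_mul (-1/2 : ℝ))) ?_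
    simp only [Pi.pow_apply, Pi.mul_apply]
    linear_combination ((-4 / L : ℝ) * (Real.cos (β t))) * (h2 t)
  have hd3 : ∀ t, HasDerivAt (fun x => (-32 / L ^ 4 : ℝ) * (Real.sin (β x) * Real.cos (β x)) + (192 / L ^ 4 : ℝ) * (Real.sin (β x) ^ 3 * Real.cos (β x)) + (8 / L ^ 2 : ℝ) * (deriv κ x) + (-1 * A : ℝ) * (deriv κ x) + (-32 / L ^ 2 : ℝ) * (deriv κ x * Real.sin (β x) ^ 2) + (-16 / L ^ 3 : ℝ) * (κ x * Real.cos (β x)) + (4 * A / L : ℝ) * (κ x * Real.cos (β x)) + (192 / L ^ 3 : ℝ) * (κ x * Real.sin (β x) ^ 2 * Real.cos (β x)) + (-12 / L : ℝ) * (κ x * deriv κ x * Real.sin (β x)) + (56 / L ^ 2 : ℝ) * (κ x ^ 2 * Real.sin (β x) * Real.cos (β x)) + (-3/2 : ℝ) * (κ x ^ 2 * deriv κ x) + (6 / L : ℝ) * (κ x ^ 3 * Real.cos (β x))) ((64 / L ^ 5 : ℝ) * (Real.sin (β t)) + (12 * B / L : ℝ) * (Real.sin (β t)) + (-1280 / L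 ^ 5 : ℝ) * (Real.sin (β t) ^ 3) + (1536 / L ^ 5 : ℝ) * (Real.sin (β t) ^ 5) + (-16 / L ^ 3 : ℝ) * (deriv κ t * Real.cos (β t)) + (4 * A / L : ℝ) * (deriv κ t * Real.cos (β t)) + (320 / L ^ 3 : ℝ) * (deriv κ t * Real.sin (β t) ^ 2 * Real.cos (β t)) + (32 / L ^ 4 : ℝ) * (κ t) + (3 * B : ℝ) * (κ t) + (-8 * A / L ^ 2 : ℝ) * (κ t) + (1 * A ^ 2 : ℝ) * (κ t) + (-1440 / L ^ 4 : ℝ) * (κ t * Real.sin (β t) ^ 2) + (40 * A / L ^ 2 : ℝ) * (κ t * Real.sin (β t) ^ 2) + (1920 / L ^ 4 : ℝ) * (κ t * Real.sin (β t) ^ 4) + (200 / L ^ 2 : ℝ) * (κ t * deriv κ t * Real.sin (β t) * Real.cos (β t)) + (-512 / L ^ 3 : ℝ) * (κ t ^ 2 * Real.sin (β t)) + (28 * A / L : ℝ) * (κ t ^ 2 * Real.sin (β t)) + (800 / L ^ 3 : ℝ) * (κ t ^ 2 * Real.sin (β t) ^ 3) + (30 / L : ℝ) * (κ t ^ 2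 * deriv κ t * Real.cos (β t)) + (-60 / L ^ 2 : ℝ) * (κ t ^ 3) + (5 * A : ℝ) * (κ t ^ 3) + (140 / L ^ 2 : ℝ) * (κ t ^ 3 * Real.sin (β t) ^ 2) + (15 / L : ℝ) * (κ t ^ 4 * Real.sin (β t)) + (3/2 : ℝ) * (κ t ^ 5)) t := by
    intro t
    refine hda_congr (((((((((((((((hβ t).sin).mul ((hβ t).cos)).const_mul (-32 / L ^ 4 : ℝ)).add (((((hβ t).sin).pow 3).mul ((hβ t).cos)).const_mul (192 / L ^ 4 : ℝ))).add ((hu1 t).const_mul (8 / L ^ 2 : ℝ))).add ((hu1 t).const_mul (-1 * A : ℝ))).add (((hu1 t).mul (((hβ t).sin).pow 2)).const_mul (-32 / L ^ 2 : ℝ))).add (((hu t).mul ((hβ t).cos)).const_mul (-16 / L ^ 3 : ℝ))).add (((hu t).mul ((hβ t).cos)).const_mul (4 * A / L : ℝ))).add ((((hu t).mul (((hβ t).sin).pow 2)).mul ((hβ t).cos)).const_mul (192 / L ^ 3 : ℝ))).add ((((hu t).mul (hu1 t)).mul ((hβ t).sin)).const_mul (-12 / L : ℝ))).add (((((hu t).pow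 2).mul ((hβ t).sin)).mul ((hβ t).cos)).const_mul (56 / L ^ 2 : ℝ))).add ((((hu t).pow 2).mul (hu1 t)).const_mul (-3/2 : ℝ))).add ((((hu t).pow 3).mul ((hβ t).cos)).const_mul (6 / L : ℝ))) ?_
    simp only [Pi.pow_apply, Pi.mul_apply]
    linear_combination ((8 / L ^ 2 : ℝ) + (-1 * A : ℝ) + (-32 / L ^ 2 : ℝ) * (Real.sin (β t) ^ 2) + (-12 / L : ℝ) * (κ t * Real.sin (β t)) + (-3/2 : ℝ) * (κ t ^ 2)) * (h2 t) + ((-12 / L : ℝ) * (Real.sin (β t)) + (-3 : ℝ) * (κ t)) * (h1 t) + ((64 / L ^ 5 : ℝ) * (Real.sin (β t)) + (-1152 / L ^ 5 : ℝ) * (Real.sin (β t) ^ 3) + (32 / L ^ 4 : ℝ) * (κ t) + (-1344 / L ^ 4 : ℝ) * (κ t * Real.sin (β t) ^ 2) + (-496 / L ^ 3 : ℝ) * (κ t ^ 2 * Real.sin (β t)) + (-56 / L ^ 2 : ℝ) * (κ t ^ 3)) * (Real.sin_sq_add_cos_sq (β t))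
  have D1 : deriv κ' = fun x => (-8 / L ^ 2 : ℝ) * (Real.sin (β x) * Real.cos (β x)) + (1 : ℝ) * (deriv κ x) + (-4 / L : ℝ) * (κ x * Real.cos (β x)) := funext fun t => (hd0 t).deriv
  have D2 : deriv (deriv κ') = fun x => (16 / L ^ 3 : ℝ) * (Real.sin (β x)) + (-32 / L ^ 3 : ℝ) * (Real.sin (β x) ^ 3) + (-4 / L : ℝ) * (deriv κ x * Real.cos (β x)) + (8 / L ^ 2 : ℝ) * (κ x) + (-1 * A : ℝ) * (κ x) + (-24 / L ^ 2 : ℝ) * (κ x * Real.sin (β x) ^ 2) + (-4 / L : ℝ) * (κ x ^ 2 * Real.sin (β x)) + (-1/2 : ℝ) * (κ x ^ 3) := by rw [D1]; exact funext fun t => (hd1 t).deriv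
  have D3 : deriv (deriv (deriv κ')) = fun x => (-32 / L ^ 4 : ℝ) * (Real.sin (β x) * Real.cos (β x)) + (192 / L ^ 4 : ℝ) * (Real.sin (β x) ^ 3 * Real.cos (β x)) + (8 / L ^ 2 : ℝ) * (deriv κ x) + (-1 * A : ℝ) * (deriv κ x) + (-32 / L ^ 2 : ℝ) * (deriv κ x * Real.sin (β x) ^ 2) + (-16 / L ^ 3 : ℝ) * (κ x * Real.cos (β x)) + (4 * A / L : ℝ) * (κ x * Real.cos (β x)) + (192 / L ^ 3 : ℝ) * (κ x * Real.sin (β x) ^ 2 * Real.cos (β x)) + (-12 / L : ℝ) * (κ x * deriv κ x * Real.sin (β x)) + (56 / L ^ 2 : ℝ) * (κ x ^ 2 * Real.sin (β x) * Real.cos (β x)) + (-3/2 : ℝ) * (κ x ^ 2 * deriv κ x) + (6 / L : ℝ) * (κ x ^ 3 * Real.cos (β x)) := by rw [D2]; exact funext fun t => (hd2 t).deriv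
  have D4 : deriv (deriv (deriv (deriv κ'))) = fun x => (64 / L ^ 5 : ℝ) * (Real.sin (β x)) + (12 * B / L : ℝ) * (Real.sin (β x)) + (-1280 / L ^ 5 : ℝ) * (Real.sin (β x) ^ 3) + (1536 / L ^ 5 : ℝ) * (Real.sin (β x) ^ 5) + (-16 / L ^ 3 : ℝ) * (deriv κ x * Real.cos (β x)) + (4 * A / L : ℝ) * (deriv κ x * Real.cos (β x)) + (320 / L ^ 3 : ℝ) * (deriv κ x * Real.sin (β x) ^ 2 * Real.cos (β x)) + (32 / L ^ 4 : ℝ) * (κ x) + (3 * B : ℝ) * (κ x) + (-8 * A / L ^ 2 : ℝ) * (κ x) + (1 * A ^ 2 : ℝ) * (κ x) + (-1440 / L ^ 4 : ℝ) * (κ x * Real.sin (β x) ^ 2) + (40 * A / L ^ 2 : ℝ) * (κ x * Real.sin (β x) ^ 2) + (1920 / L ^ 4 : ℝ) * (κ x * Real.sin (β x) ^ 4) + (200 / L ^ 2 : ℝ) * (κ x * deriv κ x * Real.sin (β x) * Real.cos (β x)) + (-512 / L ^ 3 : ℝ) * (κ x ^ 2 * Real.sin (β x)) + (28 * A / L :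 ℝ) * (κ x ^ 2 * Real.sin (β x)) + (800 / L ^ 3 : ℝ) * (κ x ^ 2 * Real.sin (β x) ^ 3) + (30 / L : ℝ) * (κ x ^ 2 * deriv κ x * Real.cos (β x)) + (-60 / L ^ 2 : ℝ) * (κ x ^ 3) + (5 * A : ℝ) * (κ x ^ 3) + (140 / L ^ 2 : ℝ) * (κ x ^ 3 * Real.sin (β x) ^ 2) + (15 / L : ℝ) * (κ x ^ 4 * Real.sin (β x)) + (3/2 : ℝ) * (κ x ^ 5) := by rw [D3]; exact funext fun t => (hd3 t).deriv
  intro t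
  have e4 : deriv (deriv (deriv (deriv κ'))) t = (64 / L ^ 5 : ℝ) * (Real.sin (β t)) + (12 * B / L : ℝ) * (Real.sin (β t)) + (-1280 / L ^ 5 : ℝ) * (Real.sin (β t) ^ 3) + (1536 / L ^ 5 : ℝ) * (Real.sin (β t) ^ 5) + (-16 / L ^ 3 : ℝ) * (deriv κ t * Real.cos (β t)) + (4 * A / L : ℝ) * (deriv κ t * Real.cos (β t)) + (320 / L ^ 3 : ℝ) * (deriv κ t * Real.sin (β t) ^ 2 * Real.cos (β t)) + (32 / L ^ 4 : ℝ) * (κ t) + (3 * B : ℝ) * (κ t) + (-8 * A / L ^ 2 : ℝ) * (κ t) + (1 * A ^ 2 : ℝ) * (κ t) + (-1440 / L ^ 4 : ℝ) * (κ t * Real.sin (β t) ^ 2) + (40 * A / L ^ 2 : ℝ) * (κ t * Real.sin (β t) ^ 2) + (1920 / L ^ 4 : ℝ) * (κ t * Real.sin (β t) ^ 4) + (200 / L ^ 2 : ℝ) * (κ t * deriv κ t * Real.sin (β t) * Real.cos (β t)) + (-512 / L ^ 3 : ℝ) * (κ t ^ 2 * Real.sin (β t)) + (28 * A / L : ℝ)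 * (κ t ^ 2 * Real.sin (β t)) + (800 / L ^ 3 : ℝ) * (κ t ^ 2 * Real.sin (β t) ^ 3) + (30 / L : ℝ) * (κ t ^ 2 * deriv κ t * Real.cos (β t)) + (-60 / L ^ 2 : ℝ) * (κ t ^ 3) + (5 * A : ℝ) * (κ t ^ 3) + (140 / L ^ 2 : ℝ) * (κ t ^ 3 * Real.sin (β t) ^ 2) + (15 / L : ℝ) * (κ t ^ 4 * Real.sin (β t)) + (3/2 : ℝ) * (κ t ^ 5) := by rw [D4]
  have e2 : deriv (deriv κ') t = (16 / L ^ 3 : ℝ) * (Real.sin (β t)) + (-32 / L ^ 3 : ℝ) * (Real.sin (β t) ^ 3) + (-4 / L : ℝ) * (deriv κ t * Real.cos (β t)) + (8 / L ^ 2 : ℝ) * (κ t) + (-1 * A : ℝ) * (κ t) + (-24 / L ^ 2 : ℝ) * (κ t * Real.sin (β t) ^ 2) + (-4 / L : ℝ) * (κ t ^ 2 * Real.sin (β t)) + (-1/2 : ℝ) * (κ t ^ 3) := by rw [D2]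
  have e1 : deriv κ' t = (-8 / L ^ 2 : ℝ) * (Real.sin (β t) * Real.cos (β t)) + (1 : ℝ) * (deriv κ t) + (-4 / L : ℝ) * (κ t * Real.cos (β t)) := by rw [D1]
  have e0 : κ' t = κ t + 4 * Real.sin (β t) / L := by rw [hκ']
  rw [e4, e2, e1, e0, hc₁, hc₂]
  linear_combination ((10 / L : ℝ) * (Real.sin (β t)) + (5/2 : ℝ) * (κ t)) * (h1 t) + ((640 / L ^ 5 : ℝ) * (Real.sin (β t) ^ 3) + (800 / L ^ 4 : ℝ) * (κ t * Real.sin (β t) ^ 2) + (320 / L ^ 3 : ℝ) * (κ t ^ 2 * Real.sin (β t)) + (40 / L ^ 2 : ℝ) * (κ t ^ 3)) * (Real.sin_sq_add_cos_sq (β t))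
end

section
/- On ℝ⁸ with coordinates (x₁, x₂, α₁, α₂, p₁, p₂, η₁, η₂) and the standard symplectic Poisson bracket (where (x₁,p₁), (x₂,p₂), (α₁,η₁), (α₂,η₂) are conjugate pairs), the functions H = ½[(p₁ - η₁ sin α₁ - η₂ sin α₂)² + (p₂ + η₁ cos α₁ + η₂ cos α₂)²] and G = p₁(p₁ - η₁ sin α₁ - η₂ sin α₂) + p₂(p₂ + η₁ cos α₁ + η₂ cos α₂) + ½(η₁ + η₂)² Poisson commute: {H, G} = 0. -/
/-!
With `U = p₁ - η₁ sin α₁ - η₂ sin α₂`, `V = p₂ + η₁ cos α₁ + η₂ cos α₂` and `E = η₁ + η₂` we have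
`H = (U² + V²)/2` and `G = p₁ U + p₂ V + E²/2`. Neither `U` nor `V` depends on `x`, and
`{U, V} = -E`, `{U, E} = p₂ - V`, `{V, E} = U - p₁`. The Leibniz rule then gives
`{U, G} = -E V` and `{V, G} = E U`, hence `{G, H} = U {G, U} + V {G, V} = 0`.
-/

open Real

/-- Partial derivative of `F : ℝ⁸ → ℝ` in the `i`-th coordinate direction. -/
noncomputable def pd (i : Fin 8) (F : (Fin 8 → ℝ) → ℝ) (z : Fin 8 → ℝ) : ℝ :=
  fderiv ℝ F z (Pi.single i 1)

/-- Standard Poisson bracket on `ℝ⁸` with coordinates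
`(x₁, x₂, α₁, α₂, p₁, p₂, η₁, η₂)` (indices `0,…,7`), where
`(x₁,p₁), (x₂,p₂), (α₁,η₁), (α₂,η₂)` are conjugate pairs. -/
noncomputable def poisson (F K : (Fin 8 → ℝ) → ℝ) (z : Fin 8 → ℝ) : ℝ :=
  (pd 0 F z * pd 4 K z - pd 4 F z * pd 0 K z) +
  (pd 1 F z * pd 5 K z - pd 5 F z * pd 1 K z) +
  (pd 2 F z * pd 6 K z - pd 6 F z * pd 2 K z) +
  (pd 3 F z * pd 7 K z - pd 7 F z * pd 3 K z)

/-- The sub-Riemannian Hamiltonian `H` (equal lengths `ℓ₁ = ℓ₂ = 1`). -/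
noncomputable def Hfun (z : Fin 8 → ℝ) : ℝ :=
  ((z 4 - z 6 * Real.sin (z 2) - z 7 * Real.sin (z 3)) ^ 2 +
   (z 5 + z 6 * Real.cos (z 2) + z 7 * Real.cos (z 3)) ^ 2) / 2

/-- The extra integral `G`. -/
noncomputable def Gfun (z : Fin 8 → ℝ) : ℝ :=
  z 4 * (z 4 - z 6 * Real.sin (z 2) - z 7 * Real.sin (z 3)) +
  z 5 * (z 5 + z 6 * Real.cos (z 2) + z 7 * Real.cos (z 3)) +
  (z 6 + z 7) ^ 2 / 2

section PoissonAlgebra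

variable {F K L : (Fin 8 → ℝ) → ℝ} {z : Fin 8 → ℝ}

lemma pd_add (hK : DifferentiableAt ℝ K z) (hL : DifferentiableAt ℝ L z) (i : Fin 8) :
    pd i (fun z => K z + L z) z = pd i K z + pd i L z := by
  simp only [pd, fderiv_fun_add hK hL, add_apply]

lemma pd_mul (hK : DifferentiableAt ℝ K z) (hL : DifferentiableAt ℝ L z) (i : Fin 8) :
    pd i (fun z => K z * L z) z = K z * pd i L z + L z * pd i K z := by
  simp only [pd, fderiv_fun_mul hK hL, add_apply, smul_apply, smul_eq_mul]

lemma pd_half_sq (hK : DifferentiableAt ℝ K z) (i : Fin 8) :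
    pd i (fun z => K z ^ 2 / 2) z = K z * pd i K z := by
  have h : HasFDerivAt (fun z => K z ^ 2 / 2) _ z :=
    ((hasDerivAt_pow 2 (K z)).div_const 2).comp_hasFDerivAt z hK.hasFDerivAt
  simp [pd, h.fderiv]

lemma pd_coord (i j : Fin 8) : pd i (fun z => z j) z = Pi.single (M := fun _ => ℝ) i 1 j := by
  rw [pd, (hasFDerivAt_apply j z).fderiv, ContinuousLinearMap.proj_apply]

variable (F K z) in
lemma poisson_antisymm : poisson F K z = -poisson K F z := by
  unfold poisson
  ring

variable (F z) in
lemma poisson_self : poisson F F z = 0 := by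
  unfold poisson
  ring

lemma poisson_add_right (hK : DifferentiableAt ℝ K z) (hL : DifferentiableAt ℝ L z) :
    poisson F (fun z => K z + L z) z = poisson F K z + poisson F L z := by
  simp only [poisson, pd_add hK hL]
  ring

lemma poisson_mul_right (hK : DifferentiableAt ℝ K z) (hL : DifferentiableAt ℝ L z) :
    poisson F (fun z => K z * L z) z = K z * poisson F L z + L z * poisson F K z := by
  simp only [poisson, pd_mul hK hL]
  ring

lemma poisson_half_sq_right (hK : DifferentiableAt ℝ K z) :
    poisson F (fun z => K z ^ 2 / 2) z = K z * poisson F K z := by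
  simp only [poisson, pd_half_sq hK]
  ring

variable (F z) in
lemma poisson_p₁ : poisson F (fun z => z 4) z = pd 0 F z := by
  simp [poisson, pd_coord]

variable (F z) in
lemma poisson_p₂ : poisson F (fun z => z 5) z = pd 1 F z := by
  simp [poisson, pd_coord]

variable (F z) in
lemma poisson_η₁_add_η₂ : poisson F (fun z => z 6 + z 7) z = pd 2 F z + pd 3 F z := by
  have hE (i : Fin 8) : pd i (fun z => z 6 + z 7) z = pd i (fun z => z 6) z + pd i (fun z => z 7) z :=
    pd_add (by fun_prop) (by fun_prop) i
  simp [poisson, hE, pd_coord]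

end PoissonAlgebra

noncomputable def Ufun (z : Fin 8 → ℝ) : ℝ := z 4 - z 6 * sin (z 2) - z 7 * sin (z 3)

noncomputable def Vfun (z : Fin 8 → ℝ) : ℝ := z 5 + z 6 * cos (z 2) + z 7 * cos (z 3)

lemma Hfun_eq : Hfun = fun z => Ufun z ^ 2 / 2 + Vfun z ^ 2 / 2 := by
  funext z
  simp only [Hfun, Ufun, Vfun]
  ring

lemma Gfun_eq : Gfun = fun z => (z 4 * Ufun z + z 5 * Vfun z) + (z 6 + z 7) ^ 2 / 2 := rfl

@[fun_prop]
lemma differentiable_Ufun : Differentiable ℝ Ufun := by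
  unfold Ufun
  fun_prop

@[fun_prop]
lemma differentiable_Vfun : Differentiable ℝ Vfun := by
  unfold Vfun
  fun_prop

lemma pd_Ufun (i : Fin 8) (z : Fin 8 → ℝ) :
    pd i Ufun z = ![0, 0, -(z 6 * cos (z 2)), -(z 7 * cos (z 3)), 1, 0, -sin (z 2), -sin (z 3)] i := by
  have hp (j : Fin 8) := hasFDerivAt_apply (𝕜 := ℝ) j z
  have h : HasFDerivAt Ufun _ z := ((hp 4).sub ((hp 6).mul (hp 2).sin)).sub ((hp 7).mul (hp 3).sin)
  rw [pd, h.fderiv]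
  fin_cases i <;> simp

lemma pd_Vfun (i : Fin 8) (z : Fin 8 → ℝ) :
    pd i Vfun z = ![0, 0, -(z 6 * sin (z 2)), -(z 7 * sin (z 3)), 0, 1, cos (z 2), cos (z 3)] i := by
  have hp (j : Fin 8) := hasFDerivAt_apply (𝕜 := ℝ) j z
  have h : HasFDerivAt Vfun _ z := ((hp 5).add ((hp 6).mul (hp 2).cos)).add ((hp 7).mul (hp 3).cos)
  rw [pd, h.fderiv]
  fin_cases i <;> simp

lemma poisson_Ufun_Vfun (z : Fin 8 → ℝ) : poisson Ufun Vfun z = -(z 6 + z 7) := by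
  simp only [poisson, pd_Ufun, pd_Vfun, Matrix.cons_val, Matrix.cons_val_zero, Matrix.cons_val_one]
  linear_combination -z 6 * sin_sq_add_cos_sq (z 2) - z 7 * sin_sq_add_cos_sq (z 3)

lemma poisson_Gfun (F : (Fin 8 → ℝ) → ℝ) (z : Fin 8 → ℝ) :
    poisson F Gfun z = z 4 * poisson F Ufun z + Ufun z * pd 0 F z + z 5 * poisson F Vfun z +
      Vfun z * pd 1 F z + (z 6 + z 7) * (pd 2 F z + pd 3 F z) := by
  rw [Gfun_eq, poisson_add_right (by fun_prop) (by fun_prop),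
    poisson_add_right (by fun_prop) (by fun_prop), poisson_mul_right (by fun_prop) (by fun_prop),
    poisson_mul_right (by fun_prop) (by fun_prop), poisson_half_sq_right (by fun_prop),
    poisson_p₁, poisson_p₂, poisson_η₁_add_η₂]
  ring

lemma poisson_Ufun_Gfun (z : Fin 8 → ℝ) : poisson Ufun Gfun z = -(z 6 + z 7) * Vfun z := by
  rw [poisson_Gfun, poisson_self, poisson_Ufun_Vfun]
  simp only [pd_Ufun, Vfun, Matrix.cons_val, Matrix.cons_val_zero, Matrix.cons_val_one]
  ring

lemma poisson_Vfun_Gfun (z : Fin 8 → ℝ) : poisson Vfun Gfun z = (z 6 + z 7) * Ufun z := by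
  rw [poisson_Gfun, poisson_self, poisson_antisymm Vfun Ufun, poisson_Ufun_Vfun]
  simp only [pd_Vfun, Ufun, Matrix.cons_val, Matrix.cons_val_zero, Matrix.cons_val_one]
  ring

theorem stmt14 : ∀ z : Fin 8 → ℝ, poisson Hfun Gfun z = 0 := by
  intro z
  rw [poisson_antisymm, Hfun_eq, poisson_add_right (by fun_prop) (by fun_prop),
    poisson_half_sq_right (by fun_prop), poisson_half_sq_right (by fun_prop),
    poisson_antisymm Gfun Ufun, poisson_antisymm Gfun Vfun, poisson_Ufun_Gfun, poisson_Vfun_Gfun]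
  ring
end

section
/- Let ℓ₁ ≠ ℓ₂ be positive reals and define λ₁ = (cos α₁) η₁/ℓ₁ + (cos α₂) η₂/ℓ₂, λ₂ = (sin α₁) η₁/ℓ₁ + (sin α₂) η₂/ℓ₂, μ₁ = η₂ sin(α₂)/ℓ₁ + (sin α₁) η₁/ℓ₂, μ₂ = η₁ + η₂. The Jacobian determinant of (α₁, α₂, η₁, η₂) ↦ (λ₁, λ₂, μ₁, μ₂) equals η₁ η₂ (cos(α₁) ℓ₁ - cos(α₂) ℓ₂)(ℓ₁² - ℓ₂²)/(ℓ₁³ ℓ₂³). -/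
open Real

set_option maxHeartbeats 1000000 in
theorem stmt18 (l1 l2 : ℝ) (hl1 : 0 < l1) (hl2 : 0 < l2) (hne : l1 ≠ l2)
    (Ψ : (Fin 4 → ℝ) → (Fin 4 → ℝ))
    -- coordinates: `α₁ = z 0`, `α₂ = z 1`, `η₁ = z 2`, `η₂ = z 3`;
    -- `Ψ = (λ₁, λ₂, μ₁, μ₂)`
    (hΨ : Ψ = fun z =>
      ![Real.cos (z 0) * z 2 / l1 + Real.cos (z 1) * z 3 / l2,
        Real.sin (z 0) * z 2 / l1 + Real.sin (z 1) * z 3 / l2,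
        z 3 * Real.sin (z 1) / l1 + Real.sin (z 0) * z 2 / l2,
        z 2 + z 3]) :
    ∀ z : Fin 4 → ℝ,
      (fderiv ℝ Ψ z).det =
        z 2 * z 3 * (Real.cos (z 0) * l1 - Real.cos (z 1) * l2) *
          (l1 ^ 2 - l2 ^ 2) / (l1 ^ 3 * l2 ^ 3) := by
  intro z
  subst hΨ
  set J : Matrix (Fin 4) (Fin 4) ℝ :=
    !![-Real.sin (z 0) * z 2 / l1, -Real.sin (z 1) * z 3 / l2, Real.cos (z 0) / l1, Real.cos (z 1) / l2;
       Real.cos (z 0) * z 2 / l1, Real.cos (z 1) * z 3 / l2, Real.sin (z 0) / l1, Real.sin (z 1) / l2;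
       Real.cos (z 0) * z 2 / l2, z 3 * Real.cos (z 1) / l1, Real.sin (z 0) / l2, Real.sin (z 1) / l1;
       0, 0, 1, 1] with hJ
  set A : (Fin 4 → ℝ) →L[ℝ] (Fin 4 → ℝ) := LinearMap.toContinuousLinearMap (Matrix.toLin' J) with hA
  have hproj : ∀ i : Fin 4, HasFDerivAt (𝕜 := ℝ) (fun z : Fin 4 → ℝ => z i)
      (ContinuousLinearMap.proj i) z := fun i => hasFDerivAt_apply i z
  have hder : HasFDerivAt (fun z : Fin 4 → ℝ =>
      ![Real.cos (z 0) * z 2 / l1 + Real.cos (z 1) * z 3 / l2,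
        Real.sin (z 0) * z 2 / l1 + Real.sin (z 1) * z 3 / l2,
        z 3 * Real.sin (z 1) / l1 + Real.sin (z 0) * z 2 / l2,
        z 2 + z 3]) A z := by
    rw [hasFDerivAt_pi']
    intro i
    fin_cases i
    · have h := ((((Real.hasDerivAt_cos (z 0)).comp_hasFDerivAt z (hproj 0)).mul
        (hproj 2)).mul_const l1⁻¹).add
        ((((Real.hasDerivAt_cos (z 1)).comp_hasFDerivAt z (hproj 1)).mul
        (hproj 3)).mul_const l2⁻¹)
      refine h.congr_fderiv ?_
      ext v
      simp [A, J, Matrix.toLin'_apply, Matrix.mulVec, dotProduct,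
        Fin.sum_univ_four, Function.comp]
      ring
    · have h := ((((Real.hasDerivAt_sin (z 0)).comp_hasFDerivAt z (hproj 0)).mul
        (hproj 2)).mul_const l1⁻¹).add
        ((((Real.hasDerivAt_sin (z 1)).comp_hasFDerivAt z (hproj 1)).mul
        (hproj 3)).mul_const l2⁻¹)
      refine h.congr_fderiv ?_
      ext v
      simp [A, J, Matrix.toLin'_apply, Matrix.mulVec, dotProduct,
        Fin.sum_univ_four, Function.comp]
      ring
    · have h := (((hproj 3).mul
        ((Real.hasDerivAt_sin (z 1)).comp_hasFDerivAt z (hproj 1))).mul_const l1⁻¹).add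
        ((((Real.hasDerivAt_sin (z 0)).comp_hasFDerivAt z (hproj 0)).mul
        (hproj 2)).mul_const l2⁻¹)
      refine h.congr_fderiv ?_
      ext v
      simp [A, J, Matrix.toLin'_apply, Matrix.mulVec, dotProduct,
        Fin.sum_univ_four, Function.comp]
      ring
    · have h := (hproj 2).add (hproj 3)
      refine h.congr_fderiv ?_
      ext v
      simp [A, J, Matrix.toLin'_apply, Matrix.mulVec, dotProduct,
        Fin.sum_univ_four, Function.comp]
  rw [hder.fderiv]
  have hdet : A.det = J.det := by
    rw [ContinuousLinearMap.det, hA]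
    rw [LinearMap.coe_toContinuousLinearMap]
    exact LinearMap.det_toLin' J
  rw [hdet]
  have hl1' : l1 ≠ 0 := ne_of_gt hl1
  have hl2' : l2 ≠ 0 := ne_of_gt hl2
  rw [hJ]
  simp [Matrix.det_succ_row_zero, Fin.sum_univ_succ, Fin.succAbove, show (Fin.castSucc 2 : Fin 4) = 2 from rfl]
  field_simp
  ring_nf
  simp only [Real.sin_sq]
  ring
end
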